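/- arXiv:1911.12108 — 2 statements merged into one kernel-verified Lean document; each statement's English description precedes it below -/
import Mathlib

section
/- If A is a finite weak antichain in ℤ^n, then there is a set A' ⊆ X_n of the same size with |π_i(A')| ≤ |π_i(A)| for each i, such that A' is a down-set: whenever x, y ∈ ℤ_{≥0}^n with x_i ≤ y_i for all i and y ∈ A', then x ∈ A'. (In particular, A' is itself a weak antichain.) -/
namespace ProjWA

variable {ι : Type*}

/-- `A ⊆ ℤ^ι` is a weak antichain if it contains no `x, y` with `x i < y i` for every `i`. -/
def IsWeakAntichain [Fintype ι] (A : Finset (ι → ℤ)) : Prop :=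
  ∀ x ∈ A, ∀ y ∈ A, ¬ ∀ i, x i < y i

/-- The projection deleting the coordinate `i`. -/
def projFun [DecidableEq ι] (i : ι) (x : ι → ℤ) : {j : ι // j ≠ i} → ℤ :=
  fun j => x j.1

/-- The image of a finite set under the projection deleting coordinate `i`. -/
def proj [Fintype ι] [DecidableEq ι] (i : ι) (A : Finset (ι → ℤ)) :
    Finset ({j : ι // j ≠ i} → ℤ) :=
  A.image (projFun i)

/-- `gap A = Σ_i |π_i(A)| - |A|`. -/
def gap [Fintype ι] [DecidableEq ι] (A : Finset (ι → ℤ)) : ℤ :=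
  (∑ i : ι, ((proj i A).card : ℤ)) - A.card

/-- `X_n`: the set of points of `ℤ_{≥0}^ι` having at least one coordinate equal to zero. -/
def XSet (ι : Type*) : Set (ι → ℤ) :=
  {x | (∀ i, 0 ≤ x i) ∧ ∃ i, x i = 0}

/-- A down-set in `ℤ_{≥0}^ι`. -/
def IsDownSet (A : Finset (ι → ℤ)) : Prop :=
  ∀ x y : ι → ℤ, (∀ i, 0 ≤ x i) → (∀ i, x i ≤ y i) → y ∈ A → x ∈ A

/-- The `i`-th bottom layer `B_i(A)`. -/
def bottomLayer [Fintype ι] [DecidableEq ι] (i : ι) (A : Finset (ι → ℤ)) : Finset (ι → ℤ) :=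
  A.filter fun x => ∀ y ∈ A, (∀ j, j ≠ i → y j = x j) → x i ≤ y i

/-- The `i`-compression `C_i(A)`: each `x ∈ B_i(A)` is replaced by the point obtained
by setting its `i`-th coordinate to `0`. -/
def compress [Fintype ι] [DecidableEq ι] (i : ι) (A : Finset (ι → ℤ)) : Finset (ι → ℤ) :=
  (A \ bottomLayer i A) ∪ (bottomLayer i A).image fun x => Function.update x i 0

/-- `layersRest A k = A \ (A_1 ∪ ⋯ ∪ A_k)` where `A_i` are the layers of `A`. -/
def layersRest {n : ℕ} (A : Finset (Fin n → ℤ)) : ℕ → Finset (Fin n → ℤ)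
  | 0 => A
  | k + 1 =>
      layersRest A k \ (if h : k < n then bottomLayer ⟨k, h⟩ (layersRest A k) else ∅)

/-- The layers `A_1, …, A_n` of `A`, defined by `A_i = B_i(A \ (A_1 ∪ ⋯ ∪ A_{i-1}))`. -/
def layer {n : ℕ} (A : Finset (Fin n → ℤ)) (i : Fin n) : Finset (Fin n → ℤ) :=
  bottomLayer i (layersRest A i.1)

/-- `compressUpTo A k = C_k(C_{k-1}(⋯(C_1(A))⋯))`. -/
def compressUpTo {n : ℕ} (A : Finset (Fin n → ℤ)) : ℕ → Finset (Fin n → ℤ)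
  | 0 => A
  | k + 1 =>
      if h : k < n then compress ⟨k, h⟩ (compressUpTo A k) else compressUpTo A k

/-- The complete `i`-compression `𝒞_i(A)`: every line in direction `i` is replaced
by an initial segment of the same size. -/
def ccompress [Fintype ι] [DecidableEq ι] (i : ι) (A : Finset (ι → ℤ)) : Finset (ι → ℤ) :=
  A.biUnion fun x =>
    (Finset.range ((A.filter fun y => ∀ j, j ≠ i → y j = x j).card)).image fun a : ℕ =>
      Function.update x i (a : ℤ)

/-- The set `T = {i : x i ≠ y i}` of coordinates where `x` and `y` differ. -/
def diffSet [Fintype ι] (x y : ι → ℤ) : Finset ι :=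
  Finset.univ.filter fun i => x i ≠ y i

/-- The maximum value of `x` on a finite set of coordinates (`⊥` if the set is empty). -/
def maxOn (s : Finset ι) (x : ι → ℤ) : WithBot ℤ :=
  (s.image x).max

/-- The largest coordinate in `s` at which `x` attains its maximum over `s`. -/
def argmaxOn [LinearOrder ι] (s : Finset ι) (x : ι → ℤ) : WithBot ι :=
  (s.filter fun i => (x i : WithBot ℤ) = maxOn s x).max

/-- The balanced order: with `T = {i : x i ≠ y i}`, `x < y` iff the maximum of `x` on `T` is
smaller than that of `y` on `T`, or they are equal and the largest index where `x` attains
this maximum on `T` is smaller than the corresponding index for `y`. -/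
def balancedLT [Fintype ι] [LinearOrder ι] (x y : ι → ℤ) : Prop :=
  x ≠ y ∧
    (maxOn (diffSet x y) x < maxOn (diffSet x y) y ∨
      (maxOn (diffSet x y) x = maxOn (diffSet x y) y ∧
        argmaxOn (diffSet x y) x < argmaxOn (diffSet x y) y))

/-- `I` is an initial segment of the balanced order on `X_ι`. -/
def IsInitSeg [Fintype ι] [LinearOrder ι] (I : Finset (ι → ℤ)) : Prop :=
  ↑I ⊆ XSet ι ∧ ∀ x ∈ I, ∀ y ∈ XSet ι, balancedLT y x → y ∈ I

/-- `S(A) = {x ∈ ℤ_{>0}^ι : replacing any one coordinate of x by 0 gives an element of A}`. -/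
def SSet [DecidableEq ι] (A : Finset (ι → ℤ)) : Set (ι → ℤ) :=
  {x | (∀ k, 0 < x k) ∧ ∀ k, Function.update x k 0 ∈ A}

/-- Insert the value `a` at position `i`. -/
def insertAt [DecidableEq ι] (i : ι) (a : ℤ) (x : {j : ι // j ≠ i} → ℤ) : ι → ℤ :=
  fun j => if h : j = i then a else x ⟨j, h⟩

/-- `L^i_a(A)`: the elements of `X_{n-1}` which, after inserting the value `a` at
position `i`, give elements of `A`. -/
def Lset [Fintype ι] [DecidableEq ι] (i : ι) (a : ℤ) (A : Finset (ι → ℤ)) :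
    Finset ({j : ι // j ≠ i} → ℤ) :=
  (proj i (A.filter fun x => x i = a)).filter fun x' => ∃ j, x' j = 0

/-- `K^i(A)`: the elements of `ℤ_{>0}^{n-1}` which, after inserting a `0` at position `i`,
give elements of `A`. -/
def Kset [Fintype ι] [DecidableEq ι] (i : ι) (A : Finset (ι → ℤ)) :
    Finset ({j : ι // j ≠ i} → ℤ) :=
  (proj i (A.filter fun x => x i = 0)).filter fun x' => ∀ j, 0 < x' j

/-- `K` is an initial segment of `ℤ_{>0}^{n-1}` with respect to the order `≺` defined by
`x ≺ y` iff inserting a `0` at position `i` into `x` gives a smaller element of `X_n`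
(in the balanced order) than inserting a `0` at position `i` into `y`. -/
def IsKInitSeg [Fintype ι] [LinearOrder ι] (i : ι) (K : Finset ({j : ι // j ≠ i} → ℤ)) :
    Prop :=
  (∀ x ∈ K, ∀ j, 0 < x j) ∧
    ∀ x ∈ K, ∀ y : {j : ι // j ≠ i} → ℤ, (∀ j, 0 < y j) →
      balancedLT (insertAt i 0 y) (insertAt i 0 x) → y ∈ K

/-- `A_N = {x ∈ ℤ^n : 0 ≤ x_j ≤ N-1 for all j, and x_i = 0 for some i}`. -/
def ANbox (n N : ℕ) : Finset (Fin n → ℤ) :=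
  (Fintype.piFinset fun _ : Fin n => (Finset.range N).image fun k : ℕ => (k : ℤ)).filter
    fun x => ∃ i, x i = 0

/-- `g(n,m)`: the minimum of `gap A` over weak antichains `A` of size `m` in `ℤ^n`. -/
noncomputable def gMin (n m : ℕ) : ℝ :=
  sInf {r : ℝ | ∃ A : Finset (Fin n → ℤ), IsWeakAntichain A ∧ A.card = m ∧ (gap A : ℝ) = r}


/-!
Translate `A` into the positive orthant. The compressions `C_1, …, C_n` push the lowest point
of every line in direction `i` down to `x i = 0`; they keep `|A|` and do not increase any
`|π_j(A)|`. A point that is still positive after all `n` steps traces back to a point of `A`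
lying strictly below it in every coordinate, so for a weak antichain the result lies in `X_n`.
The complete compressions `𝒞_1, …, 𝒞_n` then replace every line in direction `i` by an initial
segment of `ℕ` of the same length. They preserve `X_n`, `|A|` and the projection bounds, and
`𝒞_j` keeps a set down-closed in every direction in which it already was, so after all `n` of
them the set is a down-set. For `i ≠ j` the projection bounds come from the inclusions
`π_j(C_i A) ⊆ C_i(π_j A)` and `π_j(𝒞_i A) ⊆ 𝒞_i(π_j A)` in one dimension less.
-/

open Finset Function

section Projection

variable [DecidableEq ι]

theorem projFun_eq_projFun_iff {i : ι} {x y : ι → ℤ} :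
    projFun i x = projFun i y ↔ ∀ j, j ≠ i → x j = y j :=
  ⟨fun h j hj => congrFun h ⟨j, hj⟩, fun h => funext fun j => h j.1 j.2⟩

theorem projFun_update_self (i : ι) (x : ι → ℤ) (a : ℤ) :
    projFun i (update x i a) = projFun i x :=
  funext fun j => by exact update_of_ne j.2 a x

end Projection

section Lines

variable [Fintype ι] [DecidableEq ι] {i j : ι} {A : Finset (ι → ℤ)} {x y z : ι → ℤ}

def line (i : ι) (A : Finset (ι → ℤ)) (x : ι → ℤ) : Finset (ι → ℤ) :=
  {y ∈ A | ∀ j, j ≠ i → y j = x j}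

theorem mem_line : y ∈ line i A x ↔ y ∈ A ∧ ∀ j, j ≠ i → y j = x j :=
  mem_filter

theorem self_mem_line (hx : x ∈ A) : x ∈ line i A x :=
  mem_line.2 ⟨hx, fun _ _ => rfl⟩

theorem line_congr (h : ∀ j, j ≠ i → z j = x j) : line i A z = line i A x :=
  filter_congr fun y _ => forall_congr' fun j => imp_congr_right fun hj => by rw [h j hj]

theorem mem_bottomLayer :
    x ∈ bottomLayer i A ↔ x ∈ A ∧ ∀ y ∈ A, (∀ j, j ≠ i → y j = x j) → x i ≤ y i :=
  mem_filter

theorem exists_mem_bottomLayer (hx : x ∈ A) :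
    ∃ y ∈ bottomLayer i A, ∀ j, j ≠ i → y j = x j := by
  obtain ⟨y, hy, hmin⟩ := (line i A x).exists_min_image (· i) ⟨x, self_mem_line hx⟩
  obtain ⟨hyA, hyx⟩ := mem_line.1 hy
  refine ⟨y, mem_bottomLayer.2 ⟨hyA, fun z hz hzy => hmin z (mem_line.2 ⟨hz, fun j hj => ?_⟩)⟩,
    hyx⟩
  rw [hzy j hj, hyx j hj]

theorem exists_lt_of_notMem_bottomLayer (hx : x ∈ A) (hxB : x ∉ bottomLayer i A) :
    ∃ y ∈ A, (∀ j, j ≠ i → y j = x j) ∧ y i < x i := by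
  simpa [mem_bottomLayer, hx] using hxB

end Lines

section Compress

variable [Fintype ι] [DecidableEq ι] {i j : ι} {A : Finset (ι → ℤ)} {x z : ι → ℤ}

theorem mem_compress :
    z ∈ compress i A ↔
      (z ∈ A ∧ z ∉ bottomLayer i A) ∨ ∃ x ∈ bottomLayer i A, update x i 0 = z := by
  simp only [compress, mem_union, mem_sdiff, mem_image]

theorem exists_eq_of_mem_compress (hz : z ∈ compress i A) :
    ∃ x ∈ A, z = x ∨ z = update x i 0 := by
  rcases mem_compress.1 hz with ⟨hzA, -⟩ | ⟨x, hx, rfl⟩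
  · exact ⟨z, hzA, .inl rfl⟩
  · exact ⟨x, (mem_bottomLayer.1 hx).1, .inr rfl⟩

theorem exists_lt_of_mem_compress (hz : z ∈ compress i A) (hzi : z i ≠ 0) :
    z ∈ A ∧ ∃ y ∈ A, (∀ j, j ≠ i → y j = z j) ∧ y i < z i := by
  rcases mem_compress.1 hz with ⟨hzA, hzB⟩ | ⟨x, -, rfl⟩
  · exact ⟨hzA, exists_lt_of_notMem_bottomLayer hzA hzB⟩
  · exact absurd (update_self i 0 x) hzi

theorem card_compress (h : ∀ z ∈ A, z i ≠ 0) : #(compress i A) = #A := by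
  have hdisj : Disjoint (A \ bottomLayer i A) ((bottomLayer i A).image (update · i 0)) := by
    refine disjoint_left.2 fun z hz hz' => ?_
    obtain ⟨x, -, rfl⟩ := mem_image.1 hz'
    exact h _ (mem_sdiff.1 hz).1 (update_self i 0 x)
  have hinj : Set.InjOn (update · i 0) (bottomLayer i A : Set (ι → ℤ)) := by
    intro x hx y hy hxy
    have hoff : ∀ j, j ≠ i → y j = x j := fun j hj => by
      simpa [update_of_ne hj] using (congrFun hxy j).symm
    have hle := (mem_bottomLayer.1 hx).2 y (mem_bottomLayer.1 hy).1 hoff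
    have hge := (mem_bottomLayer.1 hy).2 x (mem_bottomLayer.1 hx).1 fun j hj => (hoff j hj).symm
    funext j
    by_cases hj : j = i
    · subst hj; omega
    · exact (hoff j hj).symm
  rw [compress, card_union_of_disjoint hdisj, card_image_of_injOn hinj]
  exact card_sdiff_add_card_eq_card (filter_subset _ _)

/-- The bottom points of the `i`-lines of a plane in directions `i, j` all project into one
`i`-line of `π_j A`, and after compression they land where its bottom point does. -/
theorem proj_compress_subset_s7 (hij : i ≠ j) :
    proj j (compress i A) ⊆ compress ⟨i, hij⟩ (proj j A) := by
  intro q hq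
  obtain ⟨z, hz, rfl⟩ := mem_image.1 hq
  rcases mem_compress.1 hz with ⟨hzA, hzB⟩ | ⟨x, hx, rfl⟩
  · obtain ⟨y, hyA, hyz, hyi⟩ := exists_lt_of_notMem_bottomLayer hzA hzB
    refine mem_compress.2 (.inl ⟨mem_image_of_mem _ hzA, fun hB => ?_⟩)
    have := (mem_bottomLayer.1 hB).2 (projFun j y) (mem_image_of_mem _ hyA)
      fun l hl => hyz l (fun h => hl (Subtype.ext h))
    exact absurd this (not_le.2 hyi)
  · obtain ⟨p, hp, hpx⟩ :=
      exists_mem_bottomLayer (i := ⟨i, hij⟩) (mem_image_of_mem (projFun j) (mem_bottomLayer.1 hx).1)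
    refine mem_compress.2 (.inr ⟨p, hp, funext fun l => ?_⟩)
    by_cases hl : l = ⟨i, hij⟩
    · subst hl
      simp [projFun]
    · rw [update_of_ne hl, hpx l hl]
      exact (update_of_ne (fun h => hl (Subtype.ext h)) _ _).symm

theorem card_proj_compress_le (h : ∀ z ∈ A, z i ≠ 0) (j : ι) :
    #(proj j (compress i A)) ≤ #(proj j A) := by
  rcases eq_or_ne i j with rfl | hij
  · refine card_le_card fun q hq => ?_
    obtain ⟨z, hz, rfl⟩ := mem_image.1 hq
    obtain ⟨x, hx, rfl | rfl⟩ := exists_eq_of_mem_compress hz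
    · exact mem_image_of_mem _ hx
    · exact projFun_update_self i x 0 ▸ mem_image_of_mem _ hx
  · calc #(proj j (compress i A)) ≤ #(compress ⟨i, hij⟩ (proj j A)) :=
          card_le_card (proj_compress_subset_s7 hij)
      _ = #(proj j A) := card_compress fun p hp => by
          obtain ⟨z, hz, rfl⟩ := mem_image.1 hp
          exact h z hz

end Compress

section CompressUpTo

variable {n : ℕ} {A : Finset (Fin n → ℤ)} {k : ℕ}

theorem compressUpTo_succ (hk : k < n) :
    compressUpTo A (k + 1) = compress ⟨k, hk⟩ (compressUpTo A k) :=
  dif_pos hk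

theorem pos_of_mem_compressUpTo (hA : ∀ x ∈ A, ∀ j, 0 < x j) (hk : k ≤ n) :
    ∀ z ∈ compressUpTo A k, ∀ j : Fin n, k ≤ j.1 → 0 < z j := by
  induction k with
  | zero => exact fun z hz j _ => hA z hz j
  | succ k ih =>
    replace hk : k < n := hk
    rw [compressUpTo_succ hk]
    intro z hz j hj
    have hjk : j ≠ ⟨k, hk⟩ := fun h => by subst h; simp at hj
    obtain ⟨x, hx, rfl | rfl⟩ := exists_eq_of_mem_compress hz
    · exact ih hk.le _ hx j (by omega)
    · rw [update_of_ne hjk]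
      exact ih hk.le x hx j (by omega)

theorem nonneg_of_mem_compressUpTo (hA : ∀ x ∈ A, ∀ j, 0 ≤ x j) (hk : k ≤ n) :
    ∀ z ∈ compressUpTo A k, ∀ j, 0 ≤ z j := by
  induction k with
  | zero => exact hA
  | succ k ih =>
    replace hk : k < n := hk
    rw [compressUpTo_succ hk]
    intro z hz j
    obtain ⟨x, hx, rfl | rfl⟩ := exists_eq_of_mem_compress hz
    · exact ih hk.le _ hx j
    · by_cases hj : j = ⟨k, hk⟩
      · simp [hj]
      · rw [update_of_ne hj]
        exact ih hk.le x hx j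

theorem card_compressUpTo (hA : ∀ x ∈ A, ∀ j, 0 < x j) (hk : k ≤ n) :
    #(compressUpTo A k) = #A := by
  induction k with
  | zero => rfl
  | succ k ih =>
    replace hk : k < n := hk
    rw [compressUpTo_succ hk, card_compress, ih hk.le]
    exact fun z hz => (pos_of_mem_compressUpTo hA hk.le z hz _ le_rfl).ne'

theorem card_proj_compressUpTo_le (hA : ∀ x ∈ A, ∀ j, 0 < x j) (hk : k ≤ n) (i : Fin n) :
    #(proj i (compressUpTo A k)) ≤ #(proj i A) := by
  induction k with
  | zero => rfl
  | succ k ih =>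
    replace hk : k < n := hk
    rw [compressUpTo_succ hk]
    refine (card_proj_compress_le (fun z hz => ?_) i).trans (ih hk.le)
    exact (pos_of_mem_compressUpTo hA hk.le z hz _ le_rfl).ne'

theorem mem_of_mem_compressUpTo (hk : k ≤ n) :
    ∀ v ∈ compressUpTo A k, (∀ j, v j ≠ 0) → v ∈ A := by
  induction k with
  | zero => exact fun v hv _ => hv
  | succ k ih =>
    replace hk : k < n := hk
    rw [compressUpTo_succ hk]
    exact fun v hv hv0 => ih hk.le v (exists_lt_of_mem_compress hv (hv0 _)).1 hv0

theorem exists_lt_of_mem_compressUpTo (hA : ∀ x ∈ A, ∀ j, 0 < x j) (hk : k ≤ n) :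
    ∀ v ∈ compressUpTo A k, (∀ j, v j ≠ 0) →
      ∃ z ∈ A, (∀ j : Fin n, j.1 < k → z j < v j) ∧ ∀ j : Fin n, k ≤ j.1 → z j = v j := by
  induction k with
  | zero => exact fun v hv _ => ⟨v, hv, fun j hj => absurd hj (by omega), fun _ _ => rfl⟩
  | succ k ih =>
    replace hk : k < n := hk
    rw [compressUpTo_succ hk]
    intro v hv hv0
    obtain ⟨w, hw, hwv, hwk⟩ := (exists_lt_of_mem_compress hv (hv0 _)).2
    have hw0 : ∀ j, w j ≠ 0 := fun j => by
      by_cases hj : j = ⟨k, hk⟩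
      · subst hj
        exact (pos_of_mem_compressUpTo hA hk.le w hw _ le_rfl).ne'
      · rw [hwv j hj]
        exact hv0 j
    obtain ⟨z, hz, hzw, hzw'⟩ := ih hk.le w hw hw0
    refine ⟨z, hz, fun j hj => ?_, fun j hj => ?_⟩
    · rcases Nat.lt_succ_iff_lt_or_eq.1 hj with hj | hj
      · rw [← hwv j fun h => by subst h; simp at hj]
        exact hzw j hj
      · obtain rfl : j = ⟨k, hk⟩ := Fin.ext hj
        rw [hzw' _ le_rfl]
        exact hwk
    · rw [hzw' j (by omega), hwv j fun h => by subst h; simp at hj]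

theorem compressUpTo_subset_XSet (hA : ∀ x ∈ A, ∀ j, 0 < x j) (hWA : IsWeakAntichain A) :
    ↑(compressUpTo A n) ⊆ XSet (Fin n) := by
  intro v hv
  refine ⟨nonneg_of_mem_compressUpTo (fun x hx j => (hA x hx j).le) le_rfl v hv, ?_⟩
  by_contra! hv0
  obtain ⟨z, hz, hzv, -⟩ := exists_lt_of_mem_compressUpTo hA le_rfl v hv hv0
  exact hWA z hz v (mem_of_mem_compressUpTo le_rfl v hv hv0) fun j => hzv j j.2

end CompressUpTo

section CompleteCompress

variable [Fintype ι] [DecidableEq ι] {i j : ι} {A : Finset (ι → ℤ)} {z : ι → ℤ}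

theorem mem_ccompress :
    z ∈ ccompress i A ↔
      (∃ x ∈ A, ∀ j, j ≠ i → z j = x j) ∧ 0 ≤ z i ∧ z i < #(line i A z) := by
  simp only [ccompress, mem_biUnion, mem_image, mem_range]
  constructor
  · rintro ⟨x, hx, a, ha, rfl⟩
    have hoff : ∀ j, j ≠ i → update x i (a : ℤ) j = x j := fun j hj => update_of_ne hj _ _
    rw [update_self, line_congr hoff]
    exact ⟨⟨x, hx, hoff⟩, by omega, by exact_mod_cast ha⟩
  · rintro ⟨⟨x, hx, hzx⟩, h0, hlt⟩
    rw [line_congr hzx] at hlt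
    exact ⟨x, hx, (z i).toNat, (by omega : (z i).toNat < #(line i A x)),
      update_eq_iff.2 ⟨Int.toNat_of_nonneg h0, fun j hj => (hzx j hj).symm⟩⟩

theorem proj_ccompress_self : proj i (ccompress i A) = proj i A := by
  ext p
  simp only [proj, mem_image]
  constructor
  · rintro ⟨z, hz, rfl⟩
    obtain ⟨⟨x, hx, hzx⟩, -, -⟩ := mem_ccompress.1 hz
    exact ⟨x, hx, (projFun_eq_projFun_iff.2 hzx).symm⟩
  · rintro ⟨x, hx, rfl⟩
    refine ⟨update x i 0, mem_ccompress.2 ⟨⟨x, hx, fun j hj => update_of_ne hj _ _⟩, ?_⟩,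
      projFun_update_self ..⟩
    rw [update_self, line_congr fun j hj => update_of_ne hj _ _]
    exact ⟨le_rfl, by exact_mod_cast card_pos.2 ⟨x, self_mem_line hx⟩⟩

theorem filter_projFun_ccompress {x : ι → ℤ} (hx : x ∈ A) :
    {z ∈ ccompress i A | projFun i z = projFun i x} =
      (range #(line i A x)).image fun a : ℕ => update x i (a : ℤ) := by
  ext z
  simp only [mem_filter, mem_image, mem_range, mem_ccompress, projFun_eq_projFun_iff]
  constructor
  · rintro ⟨⟨-, h0, hlt⟩, hzx⟩
    rw [line_congr hzx] at hlt
    exact ⟨(z i).toNat, by omega,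
      update_eq_iff.2 ⟨Int.toNat_of_nonneg h0, fun j hj => (hzx j hj).symm⟩⟩
  · rintro ⟨a, ha, rfl⟩
    have hoff : ∀ j, j ≠ i → update x i (a : ℤ) j = x j := fun j hj => update_of_ne hj _ _
    rw [update_self, line_congr hoff]
    exact ⟨⟨⟨x, hx, hoff⟩, by omega, by exact_mod_cast ha⟩, hoff⟩

theorem card_ccompress : #(ccompress i A) = #A := by
  have hmaps : ∀ (B : Finset (ι → ℤ)), (B : Set (ι → ℤ)).MapsTo (projFun i) (proj i B) :=
    fun B z hz => mem_image_of_mem _ hz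
  rw [card_eq_sum_card_fiberwise (hmaps _), card_eq_sum_card_fiberwise (hmaps A),
    proj_ccompress_self]
  refine sum_congr rfl fun p hp => ?_
  obtain ⟨x, hx, rfl⟩ := mem_image.1 hp
  rw [filter_projFun_ccompress hx, card_image_of_injective _ fun a b h => by
    simpa using congrFun h i, card_range]
  exact congrArg card (filter_congr fun y _ => projFun_eq_projFun_iff.symm)

theorem proj_ccompress_subset (hij : i ≠ j) :
    proj j (ccompress i A) ⊆ ccompress ⟨i, hij⟩ (proj j A) := by
  intro q hq
  obtain ⟨z, hz, rfl⟩ := mem_image.1 hq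
  obtain ⟨⟨x, hx, hzx⟩, h0, hlt⟩ := mem_ccompress.1 hz
  refine mem_ccompress.2 ⟨⟨projFun j x, mem_image_of_mem _ hx,
    fun l hl => hzx l fun h => hl (Subtype.ext h)⟩, h0, hlt.trans_le ?_⟩
  refine Nat.cast_le.2 (card_le_card_of_injOn (projFun j) (fun y hy => ?_) fun y hy y' hy' h => ?_)
  · obtain ⟨hyA, hyz⟩ := mem_line.1 hy
    exact mem_line.2 ⟨mem_image_of_mem _ hyA, fun l hl => hyz l fun h => hl (Subtype.ext h)⟩
  · obtain ⟨-, hyz⟩ := mem_line.1 hy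
    obtain ⟨-, hy'z⟩ := mem_line.1 hy'
    funext l
    by_cases hl : l = j
    · subst hl
      rw [hyz l hij.symm, hy'z l hij.symm]
    · exact projFun_eq_projFun_iff.1 h l hl

theorem card_proj_ccompress_le (i j : ι) (A : Finset (ι → ℤ)) :
    #(proj j (ccompress i A)) ≤ #(proj j A) := by
  rcases eq_or_ne i j with rfl | hij
  · rw [proj_ccompress_self]
  · exact (card_le_card (proj_ccompress_subset hij)).trans_eq card_ccompress

theorem ccompress_subset_XSet (hA : ↑A ⊆ XSet ι) : ↑(ccompress i A) ⊆ XSet ι := by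
  intro z hz
  obtain ⟨⟨x, hx, hzx⟩, h0, hlt⟩ := mem_ccompress.1 hz
  obtain ⟨hx0, l, hl⟩ := hA hx
  refine ⟨fun j => ?_, ?_⟩
  · by_cases hj : j = i
    · exact hj ▸ h0
    · exact hzx j hj ▸ hx0 j
  by_cases hzero : ∃ j, j ≠ i ∧ x j = 0
  · obtain ⟨j, hj, hxj⟩ := hzero
    exact ⟨j, (hzx j hj).trans hxj⟩
  simp only [not_exists, not_and] at hzero
  -- every point of the line through `z` has its zero coordinate at `i`, so the line is a point
  have hline : line i A z ⊆ {update z i 0} := fun y hy => by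
    obtain ⟨hyA, hyz⟩ := mem_line.1 hy
    obtain ⟨-, m, hm⟩ := hA hyA
    have hmi : m = i := by
      by_contra hmi
      exact hzero m hmi (by rw [← hzx m hmi, ← hyz m hmi, hm])
    refine mem_singleton.2 (funext fun j => ?_)
    by_cases hj : j = i
    · subst hj hmi
      rw [hm, update_self]
    · rw [update_of_ne hj, hyz j hj]
  have := card_le_card hline
  rw [card_singleton] at this
  exact ⟨i, by omega⟩

end CompleteCompress

section DownClosed

variable [Fintype ι] [DecidableEq ι] {i j : ι} {A : Finset (ι → ℤ)}

def IsDownClosedAlong (i : ι) (A : Finset (ι → ℤ)) : Prop :=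
  ∀ x ∈ A, ∀ a : ℤ, 0 ≤ a → a ≤ x i → update x i a ∈ A

theorem isDownClosedAlong_ccompress : IsDownClosedAlong i (ccompress i A) := by
  intro z hz a ha0 haz
  obtain ⟨⟨x, hx, hzx⟩, -, hlt⟩ := mem_ccompress.1 hz
  have hoff : ∀ j, j ≠ i → update z i a j = z j := fun j hj => update_of_ne hj _ _
  refine mem_ccompress.2 ⟨⟨x, hx, fun j hj => (hoff j hj).trans (hzx j hj)⟩, ?_⟩
  rw [update_self, line_congr hoff]
  exact ⟨ha0, haz.trans_lt hlt⟩

/-- Lowering the `i`-th coordinate maps the `j`-line through `z` injectively into the `j`-line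
through the lowered point. -/
theorem IsDownClosedAlong.ccompress (h : IsDownClosedAlong i A) (hij : i ≠ j) :
    IsDownClosedAlong i (ccompress j A) := by
  intro z hz a ha0 haz
  obtain ⟨⟨x, hx, hzx⟩, h0, hlt⟩ := mem_ccompress.1 hz
  have hxz : x i = z i := (hzx i hij).symm
  refine mem_ccompress.2 ⟨⟨update x i a, h x hx a ha0 (hxz ▸ haz), fun l hl => ?_⟩, ?_⟩
  · by_cases hli : l = i
    · subst hli
      simp
    · rw [update_of_ne hli, update_of_ne hli, hzx l hl]
  rw [update_of_ne hij.symm]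
  refine ⟨h0, hlt.trans_le (Nat.cast_le.2 (card_le_card_of_injOn (update · i a)
    (fun y hy => ?_) fun y hy y' hy' hyy' => ?_))⟩
  · obtain ⟨hyA, hyz⟩ := mem_line.1 hy
    refine mem_line.2 ⟨h y hyA a ha0 (hyz i hij ▸ haz), fun l hl => ?_⟩
    by_cases hli : l = i
    · subst hli
      simp
    · simp only [update_of_ne hli, hyz l hl]
  · obtain ⟨-, hyz⟩ := mem_line.1 hy
    obtain ⟨-, hy'z⟩ := mem_line.1 hy'
    funext l
    by_cases hli : l = i
    · subst hli
      rw [hyz l hij, hy'z l hij]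
    · simpa [update_of_ne hli] using congrFun hyy' l

theorem isDownSet_of_forall_isDownClosedAlong (h : ∀ i, IsDownClosedAlong i A) :
    IsDownSet A := by
  intro x y hx0 hxy hy
  suffices ∀ s : Finset ι, s.piecewise x y ∈ A by simpa using this univ
  intro s
  induction s using Finset.induction_on with
  | empty => simpa using hy
  | insert i s hi ih =>
    rw [piecewise_insert]
    exact h i _ ih (x i) (hx0 i) (by simp [piecewise_eq_of_notMem _ _ _ hi, hxy i])

theorem exists_isDownSet_of_subset_XSet {S : Finset (ι → ℤ)} (hS : ↑S ⊆ XSet ι) :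
    ∃ D : Finset (ι → ℤ), ↑D ⊆ XSet ι ∧ #D = #S ∧ (∀ i, #(proj i D) ≤ #(proj i S)) ∧
      IsDownSet D := by
  suffices ∀ s : Finset ι, ∃ D : Finset (ι → ℤ), ↑D ⊆ XSet ι ∧ #D = #S ∧
      (∀ i, #(proj i D) ≤ #(proj i S)) ∧ ∀ i ∈ s, IsDownClosedAlong i D by
    obtain ⟨D, hDX, hDcard, hDproj, hD⟩ := this univ
    exact ⟨D, hDX, hDcard, hDproj,
      isDownSet_of_forall_isDownClosedAlong fun i => hD i (mem_univ i)⟩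
  intro s
  induction s using Finset.induction_on with
  | empty => exact ⟨S, hS, rfl, fun _ => le_rfl, by simp⟩
  | insert i s _ ih =>
    obtain ⟨D, hDX, hDcard, hDproj, hD⟩ := ih
    refine ⟨ccompress i D, ccompress_subset_XSet hDX, card_ccompress.trans hDcard,
      fun j => (card_proj_ccompress_le i j D).trans (hDproj j), fun l hl => ?_⟩
    rcases eq_or_ne l i with rfl | hli
    · exact isDownClosedAlong_ccompress
    · exact (hD l ((mem_insert.1 hl).resolve_left hli)).ccompress hli

end DownClosed

theorem exists_add_pos (A : Finset (ι → ℤ)) : ∃ c : ι → ℤ, ∀ x ∈ A, ∀ j, 0 < (x + c) j := by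
  choose m hm using fun j => (A.image fun x => x j).bddBelow
  exact ⟨fun j => 1 - m j, fun x hx j => by
    have := hm j (mem_image_of_mem (fun x => x j) hx)
    simp only [Pi.add_apply]
    omega⟩

section Translate

variable [Fintype ι] {A : Finset (ι → ℤ)}

theorem card_image_add (c : ι → ℤ) : #(A.image (· + c)) = #A :=
  card_image_of_injective A (add_left_injective c)

theorem card_proj_image_add [DecidableEq ι] (c : ι → ℤ) (i : ι) :
    #(proj i (A.image (· + c))) = #(proj i A) := by
  rw [proj, image_image, show projFun i ∘ (· + c) = (· + projFun i c) ∘ projFun i from rfl,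
    ← image_image]
  exact card_image_of_injective _ (add_left_injective _)

theorem IsWeakAntichain.image_add (hA : IsWeakAntichain A) (c : ι → ℤ) :
    IsWeakAntichain (A.image (· + c)) := by
  simp only [IsWeakAntichain, forall_mem_image, Pi.add_apply, add_lt_add_iff_right]
  exact hA

end Translate

theorem isWeakAntichain_of_subset_XSet [Fintype ι] {A : Finset (ι → ℤ)} (hA : ↑A ⊆ XSet ι) :
    IsWeakAntichain A := fun x hx y hy hxy => by
  obtain ⟨-, l, hl⟩ := hA hy
  have := (hA hx).1 l
  have := hxy l
  omega

/-- For every finite weak antichain `A ⊆ ℤ^n` there is a set `A' ⊆ X_n` of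
the same size with `|π_i(A')| ≤ |π_i(A)|` for each `i` which is a down-set (and in
particular a weak antichain). -/
theorem exists_downSet_in_X (n : ℕ) (A : Finset (Fin n → ℤ)) (hA : IsWeakAntichain A) :
    ∃ A' : Finset (Fin n → ℤ), ↑A' ⊆ XSet (Fin n) ∧ A'.card = A.card ∧
      (∀ i : Fin n, (proj i A').card ≤ (proj i A).card) ∧
      IsDownSet A' ∧ IsWeakAntichain A' := by
  obtain ⟨c, hc⟩ := exists_add_pos A
  set B := A.image (· + c)
  have hB : ∀ x ∈ B, ∀ j, 0 < x j := forall_mem_image.2 hc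
  obtain ⟨D, hDX, hDcard, hDproj, hD⟩ :=
    exists_isDownSet_of_subset_XSet (compressUpTo_subset_XSet hB (hA.image_add c))
  refine ⟨D, hDX, ?_, fun i => ?_, hD, isWeakAntichain_of_subset_XSet hDX⟩
  · rw [hDcard, card_compressUpTo hB le_rfl, card_image_add]
  · calc #(proj i D) ≤ #(proj i (compressUpTo B n)) := hDproj i
      _ ≤ #(proj i B) := card_proj_compressUpTo_le hB le_rfl i
      _ = #(proj i A) := card_proj_image_add c i

end ProjWA
end

section
/- Let A ⊆ ℤ_{≥0}^n be any finite set and let C_i denote the i-compression. For every i ≠ j, π_j(C_i(A)) ⊆ C_i(π_j(A)), where the compression of π_j(A) is along the coordinate labelled by i. In particular, |π_j(C_i(A))| ≤ |π_j(A)|. -/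
namespace ProjWA

variable {ι : Type*}

/-! Deleting coordinate `j ≠ i` maps each line in direction `i` into a line in
direction `i`. A point of `A` that is not lowest on its line therefore projects to a point
that is not lowest on its projected line. A point `x` of the bottom layer is moved to
`x` with `x i = 0`, and this projects to `π_j x` with coordinate `i` set to `0`.
That point lies in `C_i(π_j(A))` because zeroing coordinate `i` of any point of a finite set
gives the same result as zeroing the lowest point on its line. Finally, compression never
increases the size of a set. -/

theorem projFun_update_of_ne [DecidableEq ι] {i j : ι} (hij : i ≠ j) (x : ι → ℤ) (a : ℤ) :
    projFun j (Function.update x i a) = Function.update (projFun j x) ⟨i, hij⟩ a := by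
  funext k
  by_cases hk : k = ⟨i, hij⟩
  · subst hk
    simp [projFun]
  · have hki : k.1 ≠ i := fun h => hk (Subtype.ext h)
    simp [projFun, Function.update_of_ne hk, Function.update_of_ne hki]

section

variable [Fintype ι] [DecidableEq ι]

theorem bottomLayer_subset (i : ι) (B : Finset (ι → ℤ)) : bottomLayer i B ⊆ B :=
  Finset.filter_subset _ B

theorem exists_mem_bottomLayer_eq_off (i : ι) {B : Finset (ι → ℤ)} {x : ι → ℤ} (hx : x ∈ B) :
    ∃ v ∈ bottomLayer i B, ∀ k, k ≠ i → v k = x k := by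
  obtain ⟨v, hv, hv_min⟩ := Finset.exists_min_image (B.filter fun y => ∀ k, k ≠ i → y k = x k)
    (fun y => y i) ⟨x, Finset.mem_filter.2 ⟨hx, fun _ _ => rfl⟩⟩
  obtain ⟨hvB, hv_line⟩ := Finset.mem_filter.1 hv
  refine ⟨v, Finset.mem_filter.2 ⟨hvB, fun y hyB hy_line => ?_⟩, hv_line⟩
  exact hv_min y (Finset.mem_filter.2 ⟨hyB, fun k hk => (hy_line k hk).trans (hv_line k hk)⟩)

theorem update_zero_mem_compress (i : ι) {B : Finset (ι → ℤ)} {x : ι → ℤ} (hx : x ∈ B) :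
    Function.update x i 0 ∈ compress i B := by
  obtain ⟨v, hv, hv_line⟩ := exists_mem_bottomLayer_eq_off i hx
  have hvx : Function.update v i 0 = Function.update x i 0 := by
    funext k
    by_cases hk : k = i
    · simp [hk]
    · simp [Function.update_of_ne hk, hv_line k hk]
  exact Finset.mem_union_right _ (Finset.mem_image.2 ⟨v, hv, hvx⟩)

theorem card_compress_le (i : ι) (B : Finset (ι → ℤ)) : (compress i B).card ≤ B.card := by
  have h_image := Finset.card_image_le (s := bottomLayer i B) (f := fun x => Function.update x i 0)
  have h_split := Finset.card_sdiff_add_card_eq_card (bottomLayer_subset i B)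
  exact (Finset.card_union_le _ _).trans (by omega)

theorem mem_bottomLayer_of_projFun_mem {i j : ι} (hij : i ≠ j) {A : Finset (ι → ℤ)}
    {x : ι → ℤ} (hx : x ∈ A) (h : projFun j x ∈ bottomLayer ⟨i, hij⟩ (proj j A)) :
    x ∈ bottomLayer i A := by
  refine Finset.mem_filter.2 ⟨hx, fun y hy hy_line => ?_⟩
  exact (Finset.mem_filter.1 h).2 (projFun j y) (Finset.mem_image_of_mem _ hy)
    fun k hk => hy_line k.1 fun h => hk (Subtype.ext h)

end

theorem proj_compress_subset_general (n : ℕ) (A : Finset (Fin n → ℤ)) (i j : Fin n) (hij : i ≠ j) :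
    proj j (compress i A) ⊆ compress (⟨i, hij⟩ : {k : Fin n // k ≠ j}) (proj j A) ∧
      (proj j (compress i A)).card ≤ (proj j A).card := by
  have h_subset : proj j (compress i A) ⊆ compress ⟨i, hij⟩ (proj j A) := by
    intro p hp
    obtain ⟨x, hx, rfl⟩ := Finset.mem_image.1 hp
    rcases Finset.mem_union.1 hx with h_kept | h_moved
    · obtain ⟨hxA, hx_not_bottom⟩ := Finset.mem_sdiff.1 h_kept
      exact Finset.mem_union_left _ (Finset.mem_sdiff.2 ⟨Finset.mem_image_of_mem _ hxA,
        fun h => hx_not_bottom (mem_bottomLayer_of_projFun_mem hij hxA h)⟩)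
    · obtain ⟨z, hz, rfl⟩ := Finset.mem_image.1 h_moved
      rw [projFun_update_of_ne hij]
      exact update_zero_mem_compress _ (Finset.mem_image_of_mem _ (bottomLayer_subset _ _ hz))
  exact ⟨h_subset, (Finset.card_le_card h_subset).trans (card_compress_le _ _)⟩

/-- For any finite `A ⊆ ℤ_{≥0}^n` and `i ≠ j`, one has
`π_j(C_i(A)) ⊆ C_i(π_j(A))` (compressing `π_j(A)` along the coordinate labelled `i`);
in particular `|π_j(C_i(A))| ≤ |π_j(A)|`. -/
theorem proj_compress_subset (n : ℕ) (A : Finset (Fin n → ℤ))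
    (hA : ∀ x ∈ A, ∀ i, 0 ≤ x i) (i j : Fin n) (hij : i ≠ j) :
    proj j (compress i A) ⊆ compress (⟨i, hij⟩ : {k : Fin n // k ≠ j}) (proj j A) ∧
      (proj j (compress i A)).card ≤ (proj j A).card :=
  proj_compress_subset_general n A i j hij

end ProjWA
end
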